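/- If 0 ≤ ε < 1 and 0 ≤ x ≤ 1, then 1 − (1 − ε)^x ≤ (1 + ε/(2(1 − ε)))·ε·x. -/

import Mathlib

/-! Since `(1 - ε)^x = exp (x log (1 - ε)) ≥ 1 + x log (1 - ε)`, it suffices to bound `-log u`
for `u = 1 - ε ∈ (0, 1]`. Writing `(u - u⁻¹) / 2 = sinh (log u)` and using `sinh t ≤ t` for
`t ≤ 0` gives `-log u ≤ (u⁻¹ - u) / 2`, which for `u = 1 - ε` is exactly
`(1 + ε / (2 (1 - ε))) ε`. -/

open Real

lemma Real.sub_inv_div_two_le_log {u : ℝ} (hu0 : 0 < u) (hu1 : u ≤ 1) :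
    (u - u⁻¹) / 2 ≤ log u := by
  rw [← sinh_log hu0]
  exact sinh_le_self_iff.2 (log_nonpos hu0.le hu1)

lemma Real.one_add_mul_log_le_rpow {u : ℝ} (hu : 0 < u) (x : ℝ) :
    1 + x * log u ≤ u ^ x := by
  rw [rpow_def_of_pos hu]
  linarith [add_one_le_exp (log u * x)]

theorem stmt2_general (ε x : ℝ) (hε0 : 0 ≤ ε) (hε1 : ε < 1)
    (hx0 : 0 ≤ x) :
    1 - (1 - ε) ^ x ≤ (1 + ε / (2 * (1 - ε))) * ε * x := by
  have hu : 0 < 1 - ε := by linarith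
  have hlog := sub_inv_div_two_le_log hu (by linarith)
  calc 1 - (1 - ε) ^ x ≤ x * -log (1 - ε) := by
        linarith [one_add_mul_log_le_rpow hu x]
    _ ≤ x * (((1 - ε)⁻¹ - (1 - ε)) / 2) := by gcongr; linarith
    _ = (1 + ε / (2 * (1 - ε))) * ε * x := by field_simp; ring

/-- Lemma 13(b): if `0 ≤ ε < 1` and `0 ≤ x ≤ 1`, then
`1 − (1 − ε)^x ≤ (1 + ε/(2(1 − ε)))·ε·x`. -/
theorem stmt2 (ε x : ℝ) (hε0 : 0 ≤ ε) (hε1 : ε < 1)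
    (hx0 : 0 ≤ x) (hx1 : x ≤ 1) :
    1 - (1 - ε) ^ x ≤ (1 + ε / (2 * (1 - ε))) * ε * x :=
  stmt2_general ε x hε0 hε1 hx0
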